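/- Cassini's identity 2: for all integers n ≥ 1, C_{k,n}² − C_{k,n−1}·C_{k,n+1} = −8·(k−1)^n. -/
import Mathlib


def C (k : ℤ) : ℕ → ℤ
  | 0 => 1
  | 1 => 3
  | (n+2) => 3*k * C k (n+1) + (1-k) * C k n

lemma aux (k : ℤ) : ∀ m : ℕ, (C k (m+1)) ^ 2 - C k m * C k (m+2) = -8 * (k-1) ^ (m+1)
  | 0 => by simp [C]; ring
  | (m+1) => by
    have ih := aux k m
    simp only [C] at *
    linear_combination (k - 1) * ih

theorem stmt16 (k : ℤ) (hk : 1 ≤ k) (n : ℕ) (hn : 1 ≤ n) :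
    (C k n) ^ 2 - C k (n-1) * C k (n+1) = -8 * (k-1) ^ n := by
  obtain ⟨m, rfl⟩ : ∃ m, n = m + 1 := ⟨n - 1, by omega⟩
  simpa using aux k m
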